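/- Let n ≥ 3, 2 ≤ i_1 ≤ n−2, i_1+1 ≤ t_2 ≤ n−1, and i_2 with i_2 + t_2 > n, n−t_2+1 ≤ i_2 ≤ n−t_2+i_1−1 and i_1 < i_2. Then the vector (i_1+1)·e_1 + (n−i_1−1)·e_{i_1+1} belongs to {α ∈ ℕ^n : |α| = n, α_1+...+α_{i_1} ≤ i_1+1, Σ_{k=1}^{i_2+t_2−n} α_k + Σ_{k=t_2+1}^n α_k ≤ i_2+1}, but does not belong to the base set of any transversal polymatroid presented by sets C_1,...,C_n ⊆ [n] in which at most i_2+t_2−n+1 of the C_k contain the element 1. -/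

import Mathlib

/-!
The vector `v` is supported on the first coordinate and on coordinate `i1 + 1`, so the three
conditions of the first part are direct computations. For the second part, the first coordinate
of a base `∑ k, e (j k)` counts the `k` with `j k = 1`, all of which have `1 ∈ C k`; hence it is at
most `i2 + t2 - n + 1 ≤ i1`, while `v` has first coordinate `i1 + 1`.
-/

open Finset

section TransversalBase

variable {ι α : Type*} [Fintype ι] [DecidableEq α]

def transversalBases (C : ι → Set α) : Set (α → ℕ) :=
  {β | ∃ j : ι → α, (∀ k, j k ∈ C k) ∧ β = ∑ k, Pi.single (j k) 1}

theorem sum_pi_single_one_apply (j : ι → α) (a : α) :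
    (∑ k, Pi.single (j k) 1 : α → ℕ) a = #{k | j k = a} := by
  simp only [Finset.sum_apply, Pi.single_apply, Finset.sum_boole, Nat.cast_id, eq_comm]

theorem apply_le_ncard_of_mem_transversalBases {C : ι → Set α} {β : α → ℕ}
    (hβ : β ∈ transversalBases C) (a : α) : β a ≤ {k | a ∈ C k}.ncard := by
  obtain ⟨j, hjC, rfl⟩ := hβ
  rw [sum_pi_single_one_apply, ← Set.ncard_coe_finset]
  refine Set.ncard_le_ncard ?_ (Set.toFinite _)
  intro k hk
  simp only [coe_filter, mem_univ, true_and, Set.mem_ofPred_eq] at hk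
  exact hk ▸ hjC k

end TransversalBase

theorem sum_pi_single_add_pi_single {ι M : Type*} [DecidableEq ι] [AddCommMonoid M]
    (s : Finset ι) (a b : ι) (x y : M) :
    ∑ k ∈ s, (Pi.single a x + Pi.single b y : ι → M) k =
      (if a ∈ s then x else 0) + (if b ∈ s then y else 0) := by
  simp only [Pi.add_apply, sum_add_distrib, sum_pi_single']

theorem stmt19 (n i1 i2 t2 : ℕ) (hi1a : 2 ≤ i1)
    (ht2a : i1 + 1 ≤ t2)
    (hi2b : i2 ≤ n - t2 + i1 - 1)
    (hi12 : i1 < i2)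
    (v : Fin n → ℕ)
    (hv : v = fun m : Fin n => if m.val = 0 then i1 + 1 else if m.val = i1 then n - i1 - 1 else 0) :
    (∑ k, v k = n ∧
      ∑ k ∈ Finset.univ.filter (fun m : Fin n => m.val < i1), v k ≤ i1 + 1 ∧
      ∑ k ∈ Finset.univ.filter (fun m : Fin n => m.val < i2 + t2 - n ∨ t2 ≤ m.val), v k
        ≤ i2 + 1) ∧
    ∀ C : Fin n → Set (Fin n),
      Set.ncard {k : Fin n | (⟨0, by omega⟩ : Fin n) ∈ C k} ≤ i2 + t2 - n + 1 →
      v ∉ {α : Fin n → ℕ | ∃ j : Fin n → Fin n, (∀ k, j k ∈ C k) ∧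
        α = ∑ k, Pi.single (j k) 1} := by
  have hv_single :
      v = Pi.single ⟨0, by omega⟩ (i1 + 1) + Pi.single ⟨i1, by omega⟩ (n - i1 - 1) := by
    subst hv
    ext ⟨m, hm⟩
    simp only [Pi.add_apply, Pi.single_apply, Fin.mk.injEq]
    split_ifs <;> omega
  refine ⟨⟨?_, ?_, ?_⟩, fun C hC hv_base => ?_⟩
  · rw [hv_single, sum_pi_single_add_pi_single]
    simp only [mem_univ, if_true]
    omega
  · rw [hv_single, sum_pi_single_add_pi_single]
    simp only [mem_filter, mem_univ, true_and]
    split_ifs <;> omega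
  · rw [hv_single, sum_pi_single_add_pi_single]
    simp only [mem_filter, mem_univ, true_and]
    split_ifs <;> omega
  · have hv_zero : v ⟨0, by omega⟩ = i1 + 1 := by simp [hv]
    have hv_zero_le := apply_le_ncard_of_mem_transversalBases hv_base ⟨0, by omega⟩
    omega
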